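/- Let $n \geq 1$, $0 < p < 1$, $A > 0$, $0 < \epsilon < 1$, and let $K$ be a bilinear Calderón–Zygmund kernel with constants $\epsilon, A$. Let $a$ be an $L^\infty$-atom for $H^p(\mathbb{R}^n)$ supported in $B(x_0, r)$, let $y_1, y_2$ satisfy $|y_1 - x_0| \approx |y_2 - x_0| \approx |y_1 - y_2| \approx Nr$ with $N$ large, let $h_1 = \chi_{B(y_1,r)}$, and let $c$ be a constant with $|c| \gtrsim N^{-2n}$. Then for $h_2 = a/c$ and every $x \in B(y_2, r)$, the absolutely convergent integral $T(h_1, h_2)(x) = \int_{\mathbb{R}^{2n}} K(x, z_1, z_2) h_1(z_1) h_2(z_2)\,dz_1 dz_2$ satisfies $|T(h_1, h_2)(x)| \lesssim \frac{1}{N^{\epsilon} r^{n/p}}$, with implied constant depending only on $n$, $p$, $\epsilon$, $A$, and the constant in $|c| \gtrsim N^{-2n}$. -/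

import Mathlib

open MeasureTheory Metric Set Function

/-- A bilinear Calderón–Zygmund kernel on `(ℝⁿ)³` with constants `ε, A`:
size condition plus Hölder-`ε` smoothness in each of the three variables. -/
def IsBilinearCZKernel (n : ℕ) (ε A : ℝ)
    (K : EuclideanSpace ℝ (Fin n) → EuclideanSpace ℝ (Fin n) →
      EuclideanSpace ℝ (Fin n) → ℝ) : Prop :=
  (∀ y₀ y₁ y₂, ¬(y₀ = y₁ ∧ y₁ = y₂) →
    |K y₀ y₁ y₂| ≤ A / (2 * (dist y₀ y₁ + dist y₀ y₂ + dist y₁ y₂)) ^ (2 * (n : ℝ))) ∧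
  (∀ y₀ y₀' y₁ y₂, dist y₀ y₀' ≤ (1 / 2) * max (dist y₀ y₁) (dist y₀ y₂) →
    |K y₀ y₁ y₂ - K y₀' y₁ y₂| ≤
      A * dist y₀ y₀' ^ ε /
        (2 * (dist y₀ y₁ + dist y₀ y₂ + dist y₁ y₂)) ^ (2 * (n : ℝ) + ε)) ∧
  (∀ y₀ y₁ y₁' y₂, dist y₁ y₁' ≤ (1 / 2) * max (dist y₁ y₀) (dist y₁ y₂) →
    |K y₀ y₁ y₂ - K y₀ y₁' y₂| ≤
      A * dist y₁ y₁' ^ ε /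
        (2 * (dist y₀ y₁ + dist y₀ y₂ + dist y₁ y₂)) ^ (2 * (n : ℝ) + ε)) ∧
  (∀ y₀ y₁ y₂ y₂', dist y₂ y₂' ≤ (1 / 2) * max (dist y₂ y₀) (dist y₂ y₁) →
    |K y₀ y₁ y₂ - K y₀ y₁ y₂'| ≤
      A * dist y₂ y₂' ^ ε /
        (2 * (dist y₀ y₁ + dist y₀ y₂ + dist y₁ y₂)) ^ (2 * (n : ℝ) + ε))

lemma rpow_arith (A c₀ v r N p ε nn : ℝ) (hA : 0 < A) (hc₀ : 0 < c₀) (hv : 0 < v)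
    (hr : 0 < r) (hN : 0 < N) :
    A * r ^ ε / ((N * r) ^ (2 * nn + ε)) *
        ((r ^ nn * v) ^ (-(1 / p)) * (N ^ (2 * nn) / c₀)) * (r ^ nn * v) * (r ^ nn * v)
      = A * v ^ (2 - 1 / p) / c₀ / (N ^ ε * r ^ (nn / p)) := by
  have hrn : (0:ℝ) < r ^ nn := Real.rpow_pos_of_pos hr nn
  rw [Real.mul_rpow hN.le hr.le, Real.mul_rpow hrn.le hv.le, ← Real.rpow_mul hr.le]
  have hL : (0:ℝ) < A * r ^ ε / (N ^ (2 * nn + ε) * r ^ (2 * nn + ε)) *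
      (r ^ (nn * -(1 / p)) * v ^ (-(1 / p)) * (N ^ (2 * nn) / c₀)) * (r ^ nn * v) *
        (r ^ nn * v) := by
    positivity
  have hR : (0:ℝ) < A * v ^ (2 - 1 / p) / c₀ / (N ^ ε * r ^ (nn / p)) := by positivity
  have hrε := (Real.rpow_pos_of_pos hr ε).ne'
  have h2 := (Real.rpow_pos_of_pos hN (2*nn+ε)).ne'
  have h3 := (Real.rpow_pos_of_pos hr (2*nn+ε)).ne'
  have h4 := (Real.rpow_pos_of_pos hr (nn * -(1/p))).ne'
  have h5 := (Real.rpow_pos_of_pos hv (-(1/p))).ne'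
  have h6 := (Real.rpow_pos_of_pos hN (2*nn)).ne'
  have h7 := (Real.rpow_pos_of_pos hv (2-1/p)).ne'
  have h8 := (Real.rpow_pos_of_pos hN ε).ne'
  have h9 := (Real.rpow_pos_of_pos hr (nn/p)).ne'
  have h10 := hrn.ne'
  rw [← Real.exp_log hL, ← Real.exp_log hR]
  congr 1
  simp only [Real.log_mul, Real.log_div, Real.log_rpow hr, Real.log_rpow hN,
    Real.log_rpow hv, ne_eq, div_eq_zero_iff, mul_eq_zero, hA.ne', hc₀.ne', hv.ne', *, or_self,
    not_false_eq_true]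
  field_simp
  ring

/-- the estimate for the error term `W₂`:
`|T(h₁, h₂)(x)| ≲ N^{-ε} r^{-n/p}` for `x ∈ B(y₂,r)`, with `h₁ = χ_{B(y₁,r)}` and
`h₂ = a/c`, where `a` is an `L^∞`-atom for `H^p` supported in `B(x₀,r)` and
`|c| ≳ N^{-2n}`. -/
theorem stmt11 (n : ℕ) (hn : 1 ≤ n) (p : ℝ) (hp0 : 0 < p) (hp1 : p < 1)
    (A ε c₀ : ℝ) (hA : 0 < A) (hε0 : 0 < ε) (hε1 : ε < 1) (hc₀ : 0 < c₀) :
    ∃ κ : ℝ, 0 < κ ∧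
      ∀ (K : EuclideanSpace ℝ (Fin n) → EuclideanSpace ℝ (Fin n) →
          EuclideanSpace ℝ (Fin n) → ℝ),
      IsBilinearCZKernel n ε A K →
      ∀ (a : EuclideanSpace ℝ (Fin n) → ℝ) (x₀ y₁ y₂ : EuclideanSpace ℝ (Fin n))
        (r N c : ℝ),
        0 < r → 4 ≤ N →
        Measurable a → Function.support a ⊆ ball x₀ r →
        (∀ x, |a x| ≤ (volume (ball x₀ r)).toReal ^ (-(1 / p))) →
        (∫ x, a x = 0) →
        N * r ≤ dist y₁ x₀ → dist y₁ x₀ ≤ 2 * (N * r) →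
        N * r ≤ dist y₂ x₀ → dist y₂ x₀ ≤ 2 * (N * r) →
        N * r ≤ dist y₁ y₂ → dist y₁ y₂ ≤ 2 * (N * r) →
        c₀ * N ^ (-(2 * (n : ℝ))) ≤ |c| →
      ∀ x ∈ ball y₂ r,
        |∫ z₁ in ball y₁ r, ∫ z₂ in ball x₀ r, K x z₁ z₂ * (a z₂ / c)| ≤
          κ / (N ^ ε * r ^ ((n : ℝ) / p)) := by
  classical
  haveI : Nonempty (Fin n) := Fin.pos_iff_nonempty.mp hn
  set v : ℝ := (volume (ball (0 : EuclideanSpace ℝ (Fin n)) 1)).toReal with hv_def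
  have hv : 0 < v :=
    ENNReal.toReal_pos (measure_ball_pos volume 0 one_pos).ne' measure_ball_lt_top.ne
  refine ⟨A * v ^ (2 - 1 / p) / c₀, by positivity, ?_⟩
  intro K hK a x₀ y₁ y₂ r N c hr hN ha_meas ha_supp ha_bdd ha_zero
    hd1 hd1' hd2 hd2' hd3 hd3' hc x hx
  have hN0 : (0:ℝ) < N := lt_of_lt_of_le (by norm_num) hN
  have hc0 : (0:ℝ) < |c| := lt_of_lt_of_le (by positivity) hc
  set V : ℝ := (volume (ball x₀ r)).toReal with hV_def
  have hV : 0 < V :=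
    ENNReal.toReal_pos (measure_ball_pos volume x₀ hr).ne' measure_ball_lt_top.ne
  have hVv : V = r ^ (n:ℝ) * v := by
    rw [hV_def, Measure.addHaar_ball volume x₀ hr.le, ENNReal.toReal_mul,
      ENNReal.toReal_ofReal (by positivity), finrank_euclideanSpace_fin,
      ← Real.rpow_natCast r n]
  set D : ℝ := (N * r) ^ (2 * (n:ℝ) + ε) with hD_def
  have hD : 0 < D := Real.rpow_pos_of_pos (by positivity) _
  set P : ℝ := A * r ^ ε / D with hP_def
  have hP : 0 < P := by positivity
  set M : ℝ := V ^ (-(1/p)) / |c| with hM_def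
  have hMpos : 0 < M := by positivity
  have hxy₂ : dist x y₂ < r := mem_ball.mp hx
  -- key pointwise smoothness estimate
  have key : ∀ z₁ ∈ ball y₁ r, ∀ z₂ ∈ ball x₀ r,
      |K x z₁ z₂ - K x z₁ x₀| ≤ P := by
    intro z₁ hz₁ z₂ hz₂
    have hz₂x₀ : dist z₂ x₀ < r := mem_ball.mp hz₂
    have hz₁y₁ : dist z₁ y₁ < r := mem_ball.mp hz₁
    have h4r : 4 * r ≤ N * r := by nlinarith
    have hzx : 2 * r ≤ dist z₂ x := by
      have ht : dist y₂ x₀ ≤ dist y₂ x + dist x z₂ + dist z₂ x₀ := dist_triangle4 _ _ _ _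
      have h1 : dist y₂ x = dist x y₂ := dist_comm _ _
      have h2 : dist x z₂ = dist z₂ x := dist_comm _ _
      linarith
    have hcond : dist z₂ x₀ ≤ (1/2) * max (dist z₂ x) (dist z₂ z₁) := by
      have := le_max_left (dist z₂ x) (dist z₂ z₁)
      linarith
    have hxz₁ : N * r - 2 * r ≤ dist x z₁ := by
      have ht : dist y₁ y₂ ≤ dist y₁ z₁ + dist z₁ x + dist x y₂ := dist_triangle4 _ _ _ _
      have h1 : dist y₁ z₁ = dist z₁ y₁ := dist_comm _ _
      have h2 : dist z₁ x = dist x z₁ := dist_comm _ _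
      linarith
    have hden : N * r ≤ 2 * (dist x z₁ + dist x z₂ + dist z₁ z₂) := by
      have h1 : (0:ℝ) ≤ dist x z₂ := dist_nonneg
      have h2 : (0:ℝ) ≤ dist z₁ z₂ := dist_nonneg
      linarith
    calc |K x z₁ z₂ - K x z₁ x₀|
        ≤ A * dist z₂ x₀ ^ ε /
            (2 * (dist x z₁ + dist x z₂ + dist z₁ z₂)) ^ (2 * (n:ℝ) + ε) :=
          hK.2.2.2 x z₁ z₂ x₀ hcond
      _ ≤ A * r ^ ε / D := by
          rw [hD_def]
          gcongr
          all_goals first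
            | positivity
            | exact dist_nonneg
            | exact hz₂x₀.le
            | exact hden
  have hMa : ∀ z₂, |a z₂ / c| ≤ M := by
    intro z₂
    rw [hM_def, abs_div]
    gcongr
    exact ha_bdd z₂
  -- the inner integral bound
  have hinner : ∀ z₁ ∈ ball y₁ r,
      ‖∫ z₂ in ball x₀ r, K x z₁ z₂ * (a z₂ / c)‖ ≤ P * M * V := by
    intro z₁ hz₁
    have hai : IntegrableOn (fun z₂ => a z₂ / c) (ball x₀ r) := by
      apply Measure.integrableOn_of_bounded (M := M) measure_ball_lt_top.ne
        ((ha_meas.div_const c).aestronglyMeasurable)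
      exact Filter.Eventually.of_forall fun z₂ => by
        rw [Real.norm_eq_abs]; exact hMa z₂
    have hzero : ∫ z₂ in ball x₀ r, K x z₁ x₀ * (a z₂ / c) = 0 := by
      rw [integral_const_mul]
      have : ∫ z₂ in ball x₀ r, a z₂ / c = 0 := by
        rw [integral_div, setIntegral_eq_integral_of_forall_compl_eq_zero
          (fun z hz => by
            by_contra h
            exact hz (ha_supp h)), ha_zero, zero_div]
      rw [this, mul_zero]
    have hrw : ∫ z₂ in ball x₀ r, K x z₁ z₂ * (a z₂ / c)
        = ∫ z₂ in ball x₀ r, (K x z₁ z₂ - K x z₁ x₀) * (a z₂ / c) := by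
      by_cases hf : IntegrableOn (fun z₂ => K x z₁ z₂ * (a z₂ / c)) (ball x₀ r)
      · rw [show (fun z₂ => (K x z₁ z₂ - K x z₁ x₀) * (a z₂ / c))
            = fun z₂ => K x z₁ z₂ * (a z₂ / c) - K x z₁ x₀ * (a z₂ / c) from
            funext fun z₂ => by ring,
          integral_sub hf (hai.const_mul _), hzero, sub_zero]
      · rw [integral_undef hf, integral_undef ?_]
        intro hcon
        apply hf
        have h := hcon.add (hai.const_mul (K x z₁ x₀))
        exact h.congr (Filter.Eventually.of_forall fun z₂ => by
          simp only [Pi.add_apply]; ring)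
    rw [hrw]
    have hb := norm_setIntegral_le_of_norm_le_const (μ := volume)
      (s := ball x₀ r) (C := P * M)
      (f := fun z₂ => (K x z₁ z₂ - K x z₁ x₀) * (a z₂ / c))
      measure_ball_lt_top ?_
    · exact hb.trans_eq (by rw [hV_def, measureReal_def])
    · intro z₂ hz₂
      rw [Real.norm_eq_abs, abs_mul]
      exact mul_le_mul (key z₁ hz₁ z₂ hz₂) (hMa z₂) (abs_nonneg _) hP.le
  -- outer integral
  have houter := norm_setIntegral_le_of_norm_le_const (μ := volume)
    (s := ball y₁ r) (C := P * M * V)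
    (f := fun z₁ => ∫ z₂ in ball x₀ r, K x z₁ z₂ * (a z₂ / c))
    measure_ball_lt_top hinner
  have hVy : (volume (ball y₁ r)).toReal = V := by
    rw [hV_def, Measure.addHaar_ball_center volume y₁,
      Measure.addHaar_ball_center volume x₀]
  rw [Real.norm_eq_abs, measureReal_def, hVy] at houter
  -- final arithmetic
  have hcineq : M ≤ V ^ (-(1/p)) * (N ^ (2 * (n:ℝ)) / c₀) := by
    have h1 : c₀ / N ^ (2 * (n:ℝ)) ≤ |c| := by
      rw [div_eq_mul_inv, ← Real.rpow_neg hN0.le]; exact hc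
    have h2 : |c|⁻¹ ≤ (c₀ / N ^ (2 * (n:ℝ)))⁻¹ := inv_anti₀ (by positivity) h1
    rw [inv_div] at h2
    rw [hM_def, div_eq_mul_inv]
    exact mul_le_mul_of_nonneg_left h2 (by positivity)
  calc |∫ z₁ in ball y₁ r, ∫ z₂ in ball x₀ r, K x z₁ z₂ * (a z₂ / c)|
      ≤ P * M * V * V := houter
    _ ≤ P * (V ^ (-(1/p)) * (N ^ (2 * (n:ℝ)) / c₀)) * V * V := by
        gcongr
    _ = A * v ^ (2 - 1 / p) / c₀ / (N ^ ε * r ^ ((n:ℝ) / p)) := by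
        rw [hP_def, hD_def, hVv]
        exact rpow_arith A c₀ v r N p ε (n:ℝ) hA hc₀ hv hr hN0
    _ ≤ A * v ^ (2 - 1 / p) / c₀ / (N ^ ε * r ^ ((n:ℝ) / p)) := le_refl _
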